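/- arXiv:2405.09401 — 5 statements merged into one kernel-verified Lean document; each statement's English description precedes it below -/
import Mathlib

section
/- Let (B, □, ∀) be an MS4-algebra, let H = {a ∈ B : □a = a} be the Heyting algebra of open elements (with a →_H b = □(¬a ∨ b)), and define ∀_H a = □∀a and ∃_H a = ¬∀¬a for a ∈ H. Then (H, ∀_H, ∃_H) is a monadic Heyting algebra. -/
/-- Let `(B, box, fa)` be an MS4-algebra, `H = {a : box a = a}` the set of open
elements, and define `A a = box (fa a)` and `Ex a = (fa aᶜ)ᶜ`. Then `(H, A, Ex)` is a
monadic Heyting algebra: `A` and `Ex` map `H` into `H` and satisfy the monadic Heyting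
algebra axioms on `H` (with `H`'s lattice operations inherited from `B` and Heyting
implication `a ⇨ b = box (aᶜ ⊔ b)`). -/
theorem stmt_5 {B : Type*} [BooleanAlgebra B] (box fa : B → B)
    (hb1 : box ⊤ = ⊤)
    (hb2 : ∀ a b, box (a ⊓ b) = box a ⊓ box b)
    (hb3 : ∀ a, box a ≤ a)
    (hb4 : ∀ a, box a ≤ box (box a))
    (hf1 : fa ⊤ = ⊤)
    (hf2 : ∀ a b, fa (a ⊓ b) = fa a ⊓ fa b)
    (hf3 : ∀ a, fa a ≤ a)
    (hf4 : ∀ a, fa a ≤ fa (fa a))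
    (hf5 : ∀ a, a ≤ fa ((fa aᶜ)ᶜ))
    (hcomm : ∀ a, box (fa a) ≤ fa (box a)) :
    -- A and Ex preserve openness
    (∀ a : B, box a = a → box (box (fa a)) = box (fa a)) ∧
    (∀ a : B, box a = a → box ((fa aᶜ)ᶜ) = (fa aᶜ)ᶜ) ∧
    -- S4-axioms for A
    (∀ a b : B, box a = a → box b = b →
      box (fa (a ⊓ b)) = box (fa a) ⊓ box (fa b)) ∧
    (∀ a : B, box a = a → box (fa a) ≤ a) ∧
    (∀ a : B, box a = a → box (fa a) ≤ box (fa (box (fa a)))) ∧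
    box (fa (⊤ : B)) = ⊤ ∧
    -- S5-axioms for Ex
    (∀ a b : B, box a = a → box b = b →
      (fa (a ⊔ b)ᶜ)ᶜ = (fa aᶜ)ᶜ ⊔ (fa bᶜ)ᶜ) ∧
    (∀ a : B, box a = a → a ≤ (fa aᶜ)ᶜ) ∧
    (∀ a : B, box a = a → (fa ((fa aᶜ)ᶜ)ᶜ)ᶜ ≤ (fa aᶜ)ᶜ) ∧
    (fa ((⊥ : B)ᶜ)ᶜ : B) = ⊥ ∧
    (∀ a b : B, box a = a → box b = b →
      (fa aᶜ)ᶜ ⊓ (fa bᶜ)ᶜ ≤ (fa ((fa aᶜ)ᶜ ⊓ b)ᶜ)ᶜ) ∧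
    -- connecting axioms
    (∀ a : B, box a = a → (fa (box (fa a))ᶜ)ᶜ = box (fa a)) ∧
    (∀ a : B, box a = a → (fa aᶜ)ᶜ = box (fa ((fa aᶜ)ᶜ))) := by
  -- monotonicity
  have bmono : ∀ {a b : B}, a ≤ b → box a ≤ box b := by
    intro a b h
    have h2 : box (a ⊓ b) = box a ⊓ box b := hb2 a b
    rw [inf_eq_left.mpr h] at h2
    exact le_trans (le_of_eq h2) inf_le_right
  have fmono : ∀ {a b : B}, a ≤ b → fa a ≤ fa b := by
    intro a b h
    have h2 : fa (a ⊓ b) = fa a ⊓ fa b := hf2 a b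
    rw [inf_eq_left.mpr h] at h2
    exact le_trans (le_of_eq h2) inf_le_right
  -- idempotence
  have bb : ∀ x : B, box (box x) = box x := fun x => le_antisymm (hb3 _) (hb4 x)
  have ff : ∀ x : B, fa (fa x) = fa x := fun x => le_antisymm (hf3 _) (hf4 x)
  -- Ex a is fa-fixed
  have hfaE : ∀ x : B, fa ((fa xᶜ)ᶜ) = (fa xᶜ)ᶜ := by
    intro x
    refine le_antisymm (hf3 _) ?_
    have h := hf5 ((fa xᶜ)ᶜ)
    rwa [compl_compl, ff] at h
  -- complement of fa-image is fa-fixed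
  have hfac : ∀ x : B, fa ((fa x)ᶜ) = (fa x)ᶜ := by
    intro x
    have h := hfaE xᶜ
    rwa [compl_compl] at h
  -- adjunction: ∃ ⊣ ∀
  have adj : ∀ x y : B, (fa xᶜ)ᶜ ≤ y → x ≤ fa y :=
    fun x y h => le_trans (hf5 x) (fmono h)
  -- dual of hcomm : ∃◇x ≤ ◇∃x
  have hcommc : ∀ w : B, (fa (box wᶜ))ᶜ ≤ (box (fa wᶜ))ᶜ :=
    fun w => compl_le_compl (hcomm wᶜ)
  -- ◇∀z ≤ ∀◇z
  have hdf : ∀ z : B, (box ((fa z)ᶜ))ᶜ ≤ fa ((box zᶜ)ᶜ) := by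
    intro z
    refine adj _ _ ?_
    rw [compl_compl]
    have h1 := hcommc (fa z)
    rw [hfac] at h1
    have h2 : (box ((fa z)ᶜ))ᶜ ≤ (box zᶜ)ᶜ := by
      have : box zᶜ ≤ box ((fa z)ᶜ) := bmono (compl_le_compl (hf3 z))
      exact compl_le_compl this
    exact le_trans h1 h2
  -- openness of Ex a for open a
  have hExOpen : ∀ a : B, box a = a → box ((fa aᶜ)ᶜ) = (fa aᶜ)ᶜ := by
    intro a ha
    refine le_antisymm (hb3 _) ?_
    rw [← compl_le_compl_iff_le, compl_compl]
    have h1 := hdf aᶜ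
    rw [compl_compl, ha] at h1
    exact h1
  -- box fa a ≤ fa (box fa a)
  have hAfix : ∀ a : B, box (fa a) ≤ fa (box (fa a)) := by
    intro a
    have h := hcomm (fa a)
    rwa [ff] at h
  have hAfix' : ∀ a : B, fa (box (fa a)) = box (fa a) :=
    fun a => le_antisymm (hf3 _) (hAfix a)
  refine ⟨fun a _ => bb (fa a), hExOpen, ?_, ?_, ?_, ?_, ?_, ?_, ?_, ?_, ?_, ?_, ?_⟩
  · intro a b _ _; rw [hf2, hb2]
  · intro a _; exact le_trans (hb3 _) (hf3 _)
  · intro a _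
    have := bmono (hAfix a)
    rwa [bb] at this
  · rw [hf1, hb1]
  · intro a b _ _; rw [compl_sup, hf2, compl_inf]
  · intro a _
    have := compl_le_compl (hf3 aᶜ)
    rwa [compl_compl] at this
  · intro a _
    rw [compl_compl, ff]
  · rw [compl_compl]
    exact le_bot_iff.mp (hf3 ⊥)
  · -- S5 lemma: Ex a ⊓ Ex b ≤ Ex (Ex a ⊓ b)
    intro a b _ _
    set x := (fa aᶜ)ᶜ with hx
    have hxfix : fa x = x := hfaE a
    have hstep : b ≤ xᶜ ⊔ (fa (x ⊓ b)ᶜ)ᶜ := by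
      have h1 : b ≤ xᶜ ⊔ (x ⊓ b) := by
        rw [sup_inf_left, compl_sup_eq_top, top_inf_eq]
        exact le_sup_right
      have h2 : x ⊓ b ≤ (fa (x ⊓ b)ᶜ)ᶜ := by
        have := compl_le_compl (hf3 (x ⊓ b)ᶜ)
        rwa [compl_compl] at this
      exact le_trans h1 (sup_le_sup_left h2 _)
    have hEmono : (fa bᶜ)ᶜ ≤ (fa (xᶜ ⊔ (fa (x ⊓ b)ᶜ)ᶜ)ᶜ)ᶜ :=
      compl_le_compl (fmono (compl_le_compl hstep))
    have hcalc : (fa (xᶜ ⊔ (fa (x ⊓ b)ᶜ)ᶜ)ᶜ)ᶜ = xᶜ ⊔ (fa (x ⊓ b)ᶜ)ᶜ := by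
      simp only [compl_sup, compl_inf, compl_compl, hf2, hxfix, ff]
    rw [hcalc] at hEmono
    calc x ⊓ (fa bᶜ)ᶜ ≤ x ⊓ (xᶜ ⊔ (fa (x ⊓ b)ᶜ)ᶜ) := inf_le_inf_left _ hEmono
      _ ≤ (fa (x ⊓ b)ᶜ)ᶜ := by
          rw [inf_sup_left, inf_compl_eq_bot, bot_sup_eq]
          exact inf_le_right
  · intro a _
    have h : fa ((box (fa a))ᶜ) = (box (fa a))ᶜ := by
      conv_lhs => rw [← hAfix' a]
      rw [hfac, hAfix']
    rw [h, compl_compl]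
  · intro a ha
    rw [hfaE, hExOpen a ha]
end

section
/- Let B be an MS4-algebra with open elements H, and let F be a monadic filter of the monadic Heyting algebra O(B). Let ↑F = {b ∈ B : a ≤ b for some a ∈ F}. Then ↑F is a monadic □-filter of B and ↑F ∩ H = F. Moreover, the maps G ↦ G ∩ H and F ↦ ↑F are mutually inverse order-isomorphisms between the poset of monadic □-filters of B and the poset of monadic filters of O(B). -/
/-- A monadic □-filter of an MS4-algebra `(B, box, fa)`. -/
def IsMonadicBoxFilter {B : Type*} [BooleanAlgebra B] (box fa : B → B)
    (G : Set B) : Prop :=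
  ⊤ ∈ G ∧ (∀ a ∈ G, ∀ b, a ≤ b → b ∈ G) ∧ (∀ a ∈ G, ∀ b ∈ G, a ⊓ b ∈ G) ∧
    (∀ a ∈ G, box a ∈ G) ∧ (∀ a ∈ G, fa a ∈ G)

/-- A monadic filter of the monadic Heyting algebra `O(B)` of open elements:
a filter of `H = {a : box a = a}` closed under `■ = box ∘ fa`. -/
def IsMonadicOpenFilter {B : Type*} [BooleanAlgebra B] (box fa : B → B)
    (F : Set B) : Prop :=
  F ⊆ {a | box a = a} ∧ ⊤ ∈ F ∧
    (∀ a ∈ F, ∀ b, box b = b → a ≤ b → b ∈ F) ∧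
    (∀ a ∈ F, ∀ b ∈ F, a ⊓ b ∈ F) ∧ (∀ a ∈ F, box (fa a) ∈ F)

/-- Let `B` be an MS4-algebra with open elements `H` and `F` a monadic filter of
`O(B)`. Then `↑F = {b : ∃ a ∈ F, a ≤ b}` is a monadic □-filter of `B` with
`↑F ∩ H = F`, and the maps `G ↦ G ∩ H` and `F ↦ ↑F` are mutually inverse
order-isomorphisms between monadic □-filters of `B` and monadic filters of `O(B)`. -/
theorem stmt_8 {B : Type*} [BooleanAlgebra B] (box fa : B → B)
    (hb1 : box ⊤ = ⊤)
    (hb2 : ∀ a b, box (a ⊓ b) = box a ⊓ box b)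
    (hb3 : ∀ a, box a ≤ a)
    (hb4 : ∀ a, box a ≤ box (box a))
    (hf1 : fa ⊤ = ⊤)
    (hf2 : ∀ a b, fa (a ⊓ b) = fa a ⊓ fa b)
    (hf3 : ∀ a, fa a ≤ a)
    (hf4 : ∀ a, fa a ≤ fa (fa a))
    (hf5 : ∀ a, a ≤ fa ((fa aᶜ)ᶜ))
    (hcomm : ∀ a, box (fa a) ≤ fa (box a))
    (F : Set B) (hF : IsMonadicOpenFilter box fa F) :
    IsMonadicBoxFilter box fa {b | ∃ a ∈ F, a ≤ b} ∧
    {b | ∃ a ∈ F, a ≤ b} ∩ {a | box a = a} = F ∧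
    (∀ G, IsMonadicBoxFilter box fa G →
      IsMonadicOpenFilter box fa (G ∩ {a | box a = a}) ∧
      {b | ∃ a ∈ G ∩ {a | box a = a}, a ≤ b} = G) ∧
    (∀ F₁ F₂, IsMonadicOpenFilter box fa F₁ → IsMonadicOpenFilter box fa F₂ →
      (F₁ ⊆ F₂ ↔ {b | ∃ a ∈ F₁, a ≤ b} ⊆ {b | ∃ a ∈ F₂, a ≤ b})) ∧
    (∀ G₁ G₂, IsMonadicBoxFilter box fa G₁ → IsMonadicBoxFilter box fa G₂ →
      (G₁ ⊆ G₂ ↔ G₁ ∩ {a | box a = a} ⊆ G₂ ∩ {a | box a = a})) := by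
  have bmono : ∀ a b : B, a ≤ b → box a ≤ box b := fun a b h => by
    have : box (a ⊓ b) = box a := by rw [inf_eq_left.mpr h]
    rw [hb2] at this; exact this ▸ inf_le_right
  have fmono : ∀ a b : B, a ≤ b → fa a ≤ fa b := fun a b h => by
    have : fa (a ⊓ b) = fa a := by rw [inf_eq_left.mpr h]
    rw [hf2] at this; exact this ▸ inf_le_right
  have bidem : ∀ a : B, box (box a) = box a :=
    fun a => le_antisymm (hb3 _) (hb4 _)
  obtain ⟨hFH, hFtop, hFup, hFinf, hFbox⟩ := hF
  -- upclosure of any monadic open filter is a monadic box filter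
  have upfil : ∀ F' : Set B, IsMonadicOpenFilter box fa F' →
      IsMonadicBoxFilter box fa {b | ∃ a ∈ F', a ≤ b} := by
    rintro F' ⟨hH, htop, hup, hinf, hbx⟩
    refine ⟨⟨⊤, htop, le_rfl⟩, ?_, ?_, ?_, ?_⟩
    · rintro a ⟨c, hc, hca⟩ b hab; exact ⟨c, hc, hca.trans hab⟩
    · rintro a ⟨c, hc, hca⟩ b ⟨d, hd, hdb⟩
      exact ⟨c ⊓ d, hinf c hc d hd, inf_le_inf hca hdb⟩
    · rintro a ⟨c, hc, hca⟩
      exact ⟨c, hc, le_trans (le_of_eq (hH hc).symm) (bmono _ _ hca)⟩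
    · rintro a ⟨c, hc, hca⟩
      exact ⟨box (fa c), hbx c hc, (hb3 _).trans (fmono _ _ hca)⟩
  have restr : ∀ F' : Set B, IsMonadicOpenFilter box fa F' →
      {b | ∃ a ∈ F', a ≤ b} ∩ {a | box a = a} = F' := by
    rintro F' ⟨hH, htop, hup, hinf, hbx⟩
    ext b
    constructor
    · rintro ⟨⟨c, hc, hcb⟩, hb⟩; exact hup c hc b hb hcb
    · intro hb; exact ⟨⟨b, hb, le_rfl⟩, hH hb⟩
  refine ⟨upfil F ⟨hFH, hFtop, hFup, hFinf, hFbox⟩,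
    restr F ⟨hFH, hFtop, hFup, hFinf, hFbox⟩, ?_, ?_, ?_⟩
  · rintro G ⟨hGt, hGup, hGinf, hGbox, hGfa⟩
    constructor
    · refine ⟨fun a ha => ha.2, ⟨hGt, hb1⟩, ?_, ?_, ?_⟩
      · rintro a ⟨haG, _⟩ b hbH hab; exact ⟨hGup a haG b hab, hbH⟩
      · rintro a ⟨haG, haH⟩ b ⟨hbG, hbH⟩
        exact ⟨hGinf a haG b hbG, by simp only [Set.mem_setOf_eq] at haH hbH ⊢; rw [hb2, haH, hbH]⟩
      · rintro a ⟨haG, _⟩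
        exact ⟨hGbox _ (hGfa a haG), bidem _⟩
    · ext b
      constructor
      · rintro ⟨c, ⟨hcG, _⟩, hcb⟩; exact hGup c hcG b hcb
      · intro hb
        exact ⟨box b, ⟨hGbox b hb, bidem b⟩, hb3 b⟩
  · rintro F₁ F₂ hF₁ hF₂
    constructor
    · rintro h b ⟨c, hc, hcb⟩; exact ⟨c, h hc, hcb⟩
    · intro h a ha
      obtain ⟨c, hc, hca⟩ := h ⟨a, ha, le_rfl⟩
      exact hF₂.2.2.1 c hc a (hF₁.1 ha) hca
  · rintro G₁ G₂ hG₁ hG₂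
    constructor
    · rintro h b ⟨hb, hbH⟩; exact ⟨h hb, hbH⟩
    · intro h b hb
      have : box b ∈ G₂ ∩ {a | box a = a} :=
        h ⟨hG₁.2.2.2.1 b hb, bidem b⟩
      exact hG₂.2.1 _ this.1 b (hb3 b)
end

section
/- Let Y be a set, R a quasi-order and E an equivalence relation on Y satisfying: x E y and y R z implies ∃u, x R u and u E z. Let E_R be the equivalence relation induced by R (x E_R y iff xRy and yRx), let X = Y/E_R with quotient map π, and define R' on X by π(x) R' π(y) iff x R y, and Q' on X by π(x) Q' π(y) iff x (E∘R) y. Then R' and Q' are well defined, R' is a partial order, Q' is a quasi-order, R' ⊆ Q', and for all x, y ∈ Y: π(x) Q' π(y) implies there exists z with π(x) R' π(z) and π(z) E_{Q'} π(y). -/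
/-- The skeleton of an MS4-frame. Let `Y` carry a quasi-order `R` and an equivalence
relation `E` satisfying the interchange condition. Let `X` be the quotient of `Y` by
the equivalence `E_R` induced by `R`, with quotient map `π = Quot.mk`. Suppose `R'`
and `Q'` are relations on `X` with `π x R' π y ↔ x R y` and
`π x Q' π y ↔ x (E ∘ R) y`. Then `R'` and `Q'` are well defined, `R'` is a partial
order, `Q'` is a quasi-order, `R' ⊆ Q'`, and `π x Q' π y` implies there is `z` with
`π x R' π z` and `π z E_{Q'} π y`. -/
theorem stmt_13 {Y : Type*} (R E : Y → Y → Prop)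
    (hRrefl : Reflexive R) (hRtrans : Transitive R)
    (hE : Equivalence E)
    (hint : ∀ x y z, E x y → R y z → ∃ u, R x u ∧ E u z)
    (R' Q' : Quot (fun x y => R x y ∧ R y x) → Quot (fun x y => R x y ∧ R y x) → Prop)
    (hR' : ∀ x y, R' (Quot.mk _ x) (Quot.mk _ y) ↔ R x y)
    (hQ' : ∀ x y, Q' (Quot.mk _ x) (Quot.mk _ y) ↔ ∃ w, R x w ∧ E w y) :
    -- well-definedness of R' and Q' on the quotient
    (∀ x x' y y', (R x x' ∧ R x' x) → (R y y' ∧ R y' y) → (R x y ↔ R x' y')) ∧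
    (∀ x x' y y', (R x x' ∧ R x' x) → (R y y' ∧ R y' y) →
      ((∃ w, R x w ∧ E w y) ↔ ∃ w, R x' w ∧ E w y')) ∧
    -- R' is a partial order
    Reflexive R' ∧ Transitive R' ∧ AntiSymmetric R' ∧
    -- Q' is a quasi-order
    Reflexive Q' ∧ Transitive Q' ∧
    -- R' ⊆ Q'
    (∀ a b, R' a b → Q' a b) ∧
    -- Q' is generated by R' followed by E_{Q'}
    (∀ x y, Q' (Quot.mk _ x) (Quot.mk _ y) →
      ∃ z, R' (Quot.mk _ x) (Quot.mk _ z) ∧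
        Q' (Quot.mk _ z) (Quot.mk _ y) ∧ Q' (Quot.mk _ y) (Quot.mk _ z)) := by
  have hQwd : ∀ x x' y y', (R x x' ∧ R x' x) → (R y y' ∧ R y' y) →
      ((∃ w, R x w ∧ E w y) → ∃ w, R x' w ∧ E w y') := by
    rintro x x' y y' ⟨_, hx'x⟩ ⟨hyy', _⟩ ⟨w, hxw, hwy⟩
    obtain ⟨u, hwu, huy'⟩ := hint w y y' hwy hyy'
    exact ⟨u, hRtrans hx'x (hRtrans hxw hwu), huy'⟩
  refine ⟨?_, ?_, ?_, ?_, ?_, ?_, ?_, ?_, ?_⟩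
  · rintro x x' y y' ⟨hxx', hx'x⟩ ⟨hyy', hy'y⟩
    exact ⟨fun h => hRtrans hx'x (hRtrans h hyy'), fun h => hRtrans hxx' (hRtrans h hy'y)⟩
  · intro x x' y y' hx hy
    exact ⟨hQwd x x' y y' hx hy, hQwd x' x y' y ⟨hx.2, hx.1⟩ ⟨hy.2, hy.1⟩⟩
  · intro a; induction a using Quot.ind with
    | _ x => exact (hR' x x).2 (hRrefl x)
  · intro a b c; induction a using Quot.ind with
    | _ x => induction b using Quot.ind with
    | _ y => induction c using Quot.ind with
    | _ z =>
      intro h1 h2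
      exact (hR' x z).2 (hRtrans ((hR' x y).1 h1) ((hR' y z).1 h2))
  · intro a b; induction a using Quot.ind with
    | _ x => induction b using Quot.ind with
    | _ y =>
      intro h1 h2
      exact Quot.sound ⟨(hR' x y).1 h1, (hR' y x).1 h2⟩
  · intro a; induction a using Quot.ind with
    | _ x => exact (hQ' x x).2 ⟨x, hRrefl x, hE.refl x⟩
  · intro a b c; induction a using Quot.ind with
    | _ x => induction b using Quot.ind with
    | _ y => induction c using Quot.ind with
    | _ z =>
      intro h1 h2
      obtain ⟨w, hxw, hwy⟩ := (hQ' x y).1 h1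
      obtain ⟨v, hyv, hvz⟩ := (hQ' y z).1 h2
      obtain ⟨u, hwu, huv⟩ := hint w y v hwy hyv
      exact (hQ' x z).2 ⟨u, hRtrans hxw hwu, hE.trans huv hvz⟩
  · intro a b; induction a using Quot.ind with
    | _ x => induction b using Quot.ind with
    | _ y =>
      intro h
      exact (hQ' x y).2 ⟨y, (hR' x y).1 h, hE.refl y⟩
  · intro x y h
    obtain ⟨w, hxw, hwy⟩ := (hQ' x y).1 h
    refine ⟨w, (hR' x w).2 hxw, (hQ' w y).2 ⟨w, hRrefl w, hwy⟩, ?_⟩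
    obtain ⟨u, hyu, huw⟩ := hint y w w (hE.symm hwy) (hRrefl w)
    exact (hQ' y w).2 ⟨u, hyu, huw⟩
end

section
/- In a subdirectly irreducible monadic Heyting algebra, if ∀a₁ ∨ ∀a₂ = 1 then a₁ = 1 or a₂ = 1. -/
/-- A monadic filter of a monadic Heyting algebra `(H, A, E)`: a lattice filter closed
under `A`. -/
def IsMonadicFilter {H : Type*} [HeytingAlgebra H] (A : H → H) (F : Set H) : Prop :=
  ⊤ ∈ F ∧ (∀ a ∈ F, ∀ b, a ≤ b → b ∈ F) ∧ (∀ a ∈ F, ∀ b ∈ F, a ⊓ b ∈ F) ∧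
    (∀ a ∈ F, A a ∈ F)

/-- In a subdirectly irreducible monadic Heyting algebra (characterized by the
existence of an element `d ≠ ⊤` belonging to every monadic filter different from
`{⊤}`), if `A a₁ ⊔ A a₂ = ⊤` then `a₁ = ⊤` or `a₂ = ⊤`. -/
theorem stmt_14 {H : Type*} [HeytingAlgebra H] (A E : H → H)
    (hA1 : ∀ a b, A (a ⊓ b) = A a ⊓ A b)
    (hA2 : ∀ a, A a ≤ a)
    (hA3 : ∀ a, A a ≤ A (A a))
    (hA4 : A ⊤ = ⊤)
    (hE1 : ∀ a b, E (a ⊔ b) = E a ⊔ E b)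
    (hE2 : ∀ a, a ≤ E a)
    (hE3 : ∀ a, E (E a) ≤ E a)
    (hE4 : E ⊥ = ⊥)
    (hE5 : ∀ a b, E a ⊓ E b ≤ E (E a ⊓ b))
    (hAE1 : ∀ a, E (A a) = A a)
    (hAE2 : ∀ a, E a = A (E a))
    (hSI : ∃ d : H, d ≠ ⊤ ∧
      ∀ F : Set H, IsMonadicFilter A F → F ≠ {⊤} → d ∈ F) :
    ∀ a₁ a₂ : H, A a₁ ⊔ A a₂ = ⊤ → a₁ = ⊤ ∨ a₂ = ⊤ := by
  obtain ⟨d, hd, hdF⟩ := hSI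
  have hmono : ∀ x y : H, x ≤ y → A x ≤ A y := by
    intro x y hxy
    have : A (x ⊓ y) = A x := by rw [inf_eq_left.mpr hxy]
    calc A x = A x ⊓ A y := by rw [← hA1, inf_eq_left.mpr hxy]
    _ ≤ A y := inf_le_right
  have key : ∀ a : H, a ≠ ⊤ → A a ≤ d := by
    intro a ha
    have hF : IsMonadicFilter A {b : H | A a ≤ b} := by
      refine ⟨le_top, ?_, ?_, ?_⟩
      · intro x hx y hxy; exact le_trans hx hxy
      · intro x hx y hy; exact le_inf hx hy
      · intro x hx
        exact le_trans (le_antisymm (hA3 a) (hA2 (A a))).le (hmono _ _ hx)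
    have hne : ({b : H | A a ≤ b} : Set H) ≠ {⊤} := by
      intro h
      have : a ∈ ({⊤} : Set H) := h ▸ (hA2 a : a ∈ {b : H | A a ≤ b})
      exact ha this
    exact hdF _ hF hne
  intro a₁ a₂ h12
  by_contra hc
  push_neg at hc
  have : (⊤ : H) ≤ d := h12 ▸ sup_le (key a₁ hc.1) (key a₂ hc.2)
  exact hd (top_le_iff.mp this)
end

section
/- Let G₁ = (Y₁, R₁, E₁) and G₂ = (Y₂, R₂, E₂) be finite MS4-frames in which R₁ and R₂ are partial orders, with Qᵢ = Eᵢ∘Rᵢ. If there is a bijection g : Y₁ → Y₂ that preserves and reflects R (x R₁ y iff g(x) R₂ g(y)) and preserves and reflects Q (x Q₁ y iff g(x) Q₂ g(y)), then g also preserves and reflects E (x E₁ y iff g(x) E₂ g(y)); hence G₁ and G₂ are isomorphic as MS4-frames. -/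
/-- In a finite MS4-frame whose quasi-order `R` is a partial order,
`E` is recoverable from `Q = E ∘ R`: `E x y` iff `Q x y` and `Q y x`. -/
lemma ms4_key {Y : Type*} [Finite Y] (R E : Y → Y → Prop)
    (hrefl : Reflexive R) (htrans : Transitive R) (hanti : AntiSymmetric R)
    (hE : Equivalence E)
    (hint : ∀ x y z, E x y → R y z → ∃ u, R x u ∧ E u z) :
    ∀ x y, (∃ w, R x w ∧ E w y) → (∃ w, R y w ∧ E w x) → E x y := by
  have main : ∀ n x y, Set.ncard {z | R x z} ≤ n →
      (∃ w, R x w ∧ E w y) → (∃ w, R y w ∧ E w x) → E x y := by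
    intro n
    induction n with
    | zero =>
      intro x y hcard _ _
      exfalso
      have : 0 < Set.ncard {z | R x z} :=
        (Set.ncard_pos (Set.toFinite _)).mpr ⟨x, hrefl x⟩
      omega
    | succ n ih =>
      rintro x y hcard ⟨w, hxw, hwy⟩ ⟨v, hyv, hvx⟩
      by_cases hwx : w = x
      · subst hwx; exact hwy
      · obtain ⟨u, hwu, huv⟩ := hint w y v hwy hyv
        have hux : E u x := hE.trans huv hvx
        have hss : {z | R w z} ⊂ {z | R x z} := by
          constructor
          · intro z hz; exact htrans hxw hz
          · intro hsub
            exact hwx (hanti (hsub (hrefl x)) hxw)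
        have hlt : Set.ncard {z | R w z} < Set.ncard {z | R x z} :=
          Set.ncard_lt_ncard hss (Set.toFinite _)
        have hwx' : E w x := ih w x (by omega) ⟨u, hwu, hux⟩ ⟨w, hxw, hE.refl w⟩
        exact hE.trans (hE.symm hwx') hwy
  intro x y
  exact main (Set.ncard {z | R x z}) x y le_rfl

/-- Let `G₁ = (Y₁, R₁, E₁)` and `G₂ = (Y₂, R₂, E₂)` be finite MS4-frames whose
quasi-orders `R₁`, `R₂` are partial orders, and `Qᵢ = Eᵢ ∘ Rᵢ`. Any bijection
`g : Y₁ → Y₂` that preserves and reflects `R` and `Q` also preserves and reflects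
`E`; hence `G₁` and `G₂` are isomorphic as MS4-frames. -/
theorem stmt_18 {Y₁ Y₂ : Type*} [Finite Y₁] [Finite Y₂]
    (R₁ E₁ : Y₁ → Y₁ → Prop) (R₂ E₂ : Y₂ → Y₂ → Prop)
    (hR₁refl : Reflexive R₁) (hR₁trans : Transitive R₁) (hR₁anti : AntiSymmetric R₁)
    (hR₂refl : Reflexive R₂) (hR₂trans : Transitive R₂) (hR₂anti : AntiSymmetric R₂)
    (hE₁ : Equivalence E₁) (hE₂ : Equivalence E₂)
    (hint₁ : ∀ x y z, E₁ x y → R₁ y z → ∃ u, R₁ x u ∧ E₁ u z)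
    (hint₂ : ∀ x y z, E₂ x y → R₂ y z → ∃ u, R₂ x u ∧ E₂ u z)
    (g : Y₁ → Y₂) (hg : Function.Bijective g)
    (hgR : ∀ x y, R₁ x y ↔ R₂ (g x) (g y))
    (hgQ : ∀ x y, (∃ w, R₁ x w ∧ E₁ w y) ↔ ∃ w, R₂ (g x) w ∧ E₂ w (g y)) :
    ∀ x y, E₁ x y ↔ E₂ (g x) (g y) := by
  intro x y
  constructor
  · intro h
    apply ms4_key R₂ E₂ hR₂refl hR₂trans hR₂anti hE₂ hint₂
    · exact (hgQ x y).mp ⟨x, hR₁refl x, h⟩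
    · exact (hgQ y x).mp ⟨y, hR₁refl y, hE₁.symm h⟩
  · intro h
    apply ms4_key R₁ E₁ hR₁refl hR₁trans hR₁anti hE₁ hint₁
    · exact (hgQ x y).mpr ⟨g x, hR₂refl (g x), h⟩
    · exact (hgQ y x).mpr ⟨g y, hR₂refl (g y), hE₂.symm h⟩
end
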